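/- (Nieto–Rodríguez-López, comparable version) Let (X, d, ≤) be an ordered metric space and f a self-map on X such that: (a) (X, d) is complete; (b) for all x, y ∈ X, x ≤ y implies f(x) ≤ f(y) or f(x) ≥ f(y); (c) either f is continuous or (X, d, ≤) satisfies: for every sequence (x_n) converging to x whose consecutive terms are comparable, there exists a subsequence (x_{n_k}) every term of which is comparable to the limit x; (d) there exists x₀ ∈ X with x₀ ≺≻ f(x₀); (e) there exists α ∈ [0,1) such that d(f(x), f(y)) ≤ α·d(x, y) for all x, y ∈ X with x ≤ y; (f) for every pair x, y ∈ X there exists z ∈ X comparable to both x and y. Then f has a unique fixed point x̄, and moreover for every x ∈ X the sequence of iterates fⁿ(x) converges to x̄. -/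

import Mathlib

/-!
Comparability is preserved by `f` and `f` contracts comparable pairs, so the orbits of two
comparable points approach each other geometrically. Hence the orbit of `x₀` is Cauchy; its limit
`z` is fixed, either by continuity or because the TCC property makes `f` continuous at `z` along a
subsequence of the orbit. Any `x` is linked to `z` by a chain `x ≺≻ w ≺≻ z`, so its orbit converges
to `z` too, which also forces uniqueness of the fixed point.
-/

open Filter Topology

section

variable {X : Type*} [MetricSpace X] [PartialOrder X]

/-- Two elements of an ordered set are comparable. -/
def Cmp (x y : X) : Prop := x ≤ y ∨ y ≤ x

/-- `f` is `g`-comparable: `g x ≺≻ g y` implies `f x ≺≻ f y`. -/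
def GComparable (f g : X → X) : Prop :=
  ∀ x y : X, Cmp (g x) (g y) → Cmp (f x) (f y)

/-- The `g`-TCC property of an ordered metric space. -/
def GTCC (g : X → X) : Prop :=
  ∀ (x : ℕ → X) (l : X), (∀ n, Cmp (x n) (x (n + 1))) →
    Tendsto x atTop (𝓝 l) →
      ∃ φ : ℕ → ℕ, StrictMono φ ∧ ∀ k, Cmp (g (x (φ k))) (g l)

/-- The TCC property of a subset of an ordered metric space. -/
def TCCOn (Y : Set X) : Prop :=
  ∀ (x : ℕ → X), (∀ n, x n ∈ Y) → ∀ l ∈ Y, (∀ n, Cmp (x n) (x (n + 1))) →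
    Tendsto x atTop (𝓝 l) →
      ∃ φ : ℕ → ℕ, StrictMono φ ∧ ∀ k, Cmp (x (φ k)) l

/-- The TCC property of an ordered metric space. -/
def TCC (X : Type*) [MetricSpace X] [PartialOrder X] : Prop :=
  ∀ (x : ℕ → X) (l : X), (∀ n, Cmp (x n) (x (n + 1))) →
    Tendsto x atTop (𝓝 l) →
      ∃ φ : ℕ → ℕ, StrictMono φ ∧ ∀ k, Cmp (x (φ k)) l

/-- The pair `(f, g)` is compatible. -/
def Compatible (f g : X → X) : Prop :=
  ∀ (x : ℕ → X) (l : X), Tendsto (fun n => g (x n)) atTop (𝓝 l) →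
    Tendsto (fun n => f (x n)) atTop (𝓝 l) →
      Tendsto (fun n => dist (g (f (x n))) (f (g (x n)))) atTop (𝓝 0)

/-- `f` is `g`-continuous. -/
def GContinuous (f g : X → X) : Prop :=
  ∀ (x : ℕ → X) (a : X), Tendsto (fun n => g (x n)) atTop (𝓝 (g a)) →
    Tendsto (fun n => f (x n)) atTop (𝓝 (f a))

/-- There exists a `≺≻`-chain between `a` and `b` inside `E`. -/
def ChainIn (E : Set X) (a b : X) : Prop :=
  ∃ (k : ℕ) (e : ℕ → X), 2 ≤ k ∧ (∀ i < k, e i ∈ E) ∧ e 0 = a ∧ e (k - 1) = b ∧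
    ∀ i, i + 1 < k → Cmp (e i) (e (i + 1))

end

open Function

section

variable {X : Type*} [PartialOrder X]

theorem Cmp.symm {x y : X} (h : Cmp x y) : Cmp y x := Or.symm h

variable {f : X → X} {α : ℝ}

theorem cmp_apply_of_le_imp_cmp (hf : ∀ x y : X, x ≤ y → Cmp (f x) (f y)) {x y : X}
    (h : Cmp x y) : Cmp (f x) (f y) :=
  h.elim (hf x y) fun h => (hf y x h).symm

theorem cmp_iterate (hcmp : ∀ x y : X, Cmp x y → Cmp (f x) (f y)) {x y : X} (h : Cmp x y)
    (n : ℕ) : Cmp (f^[n] x) (f^[n] y) := by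
  induction n with
  | zero => exact h
  | succ n ih =>
    rw [iterate_succ_apply', iterate_succ_apply']
    exact hcmp _ _ ih

variable [MetricSpace X]

theorem dist_apply_le_of_cmp (hf : ∀ x y : X, x ≤ y → dist (f x) (f y) ≤ α * dist x y)
    {x y : X} (h : Cmp x y) : dist (f x) (f y) ≤ α * dist x y := by
  rcases h with h | h
  · exact hf x y h
  · simpa only [dist_comm] using hf y x h

theorem dist_iterate_le_of_cmp (hcmp : ∀ x y : X, Cmp x y → Cmp (f x) (f y)) (hα : 0 ≤ α)
    (hdist : ∀ x y : X, Cmp x y → dist (f x) (f y) ≤ α * dist x y) {x y : X} (h : Cmp x y)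
    (n : ℕ) : dist (f^[n] x) (f^[n] y) ≤ α ^ n * dist x y := by
  induction n with
  | zero => simp
  | succ n ih =>
    rw [iterate_succ_apply', iterate_succ_apply']
    calc dist (f (f^[n] x)) (f (f^[n] y)) ≤ α * dist (f^[n] x) (f^[n] y) :=
          hdist _ _ (cmp_iterate hcmp h n)
      _ ≤ α * (α ^ n * dist x y) := mul_le_mul_of_nonneg_left ih hα
      _ = α ^ (n + 1) * dist x y := by ring

theorem tendsto_dist_iterate_of_cmp (hcmp : ∀ x y : X, Cmp x y → Cmp (f x) (f y))
    (hα₀ : 0 ≤ α) (hα₁ : α < 1) (hdist : ∀ x y : X, Cmp x y → dist (f x) (f y) ≤ α * dist x y)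
    {x y : X} (h : Cmp x y) :
    Tendsto (fun n => dist (f^[n] x) (f^[n] y)) atTop (𝓝 0) := by
  refine squeeze_zero (fun _ => dist_nonneg) (dist_iterate_le_of_cmp hcmp hα₀ hdist h) ?_
  simpa using (tendsto_pow_atTop_nhds_zero_of_lt_one hα₀ hα₁).mul_const (dist x y)

theorem cauchySeq_iterate_of_cmp_apply (hcmp : ∀ x y : X, Cmp x y → Cmp (f x) (f y))
    (hα₀ : 0 ≤ α) (hα₁ : α < 1) (hdist : ∀ x y : X, Cmp x y → dist (f x) (f y) ≤ α * dist x y)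
    {x : X} (hx : Cmp x (f x)) : CauchySeq fun n => f^[n] x := by
  refine cauchySeq_of_le_geometric α (dist x (f x)) hα₁ fun n => ?_
  rw [iterate_succ_apply, mul_comm]
  exact dist_iterate_le_of_cmp hcmp hα₀ hdist hx n

theorem isFixedPt_of_tendsto_iterate_of_tcc (htcc : TCC X)
    (hcmp : ∀ x y : X, Cmp x y → Cmp (f x) (f y))
    (hdist : ∀ x y : X, Cmp x y → dist (f x) (f y) ≤ α * dist x y) {x z : X}
    (hx : Cmp x (f x)) (hz : Tendsto (fun n => f^[n] x) atTop (𝓝 z)) : IsFixedPt f z := by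
  have horbit (n : ℕ) : Cmp (f^[n] x) (f^[n + 1] x) := by
    simpa only [iterate_succ_apply] using cmp_iterate hcmp hx n
  obtain ⟨φ, hφ, hφz⟩ := htcc _ z horbit hz
  -- along the subsequence comparable with `z`, the contraction makes `f` continuous at `z`
  have hf_lim : Tendsto (fun k => f (f^[φ k] x)) atTop (𝓝 (f z)) := by
    rw [tendsto_iff_dist_tendsto_zero]
    refine squeeze_zero (fun _ => dist_nonneg) (fun k => hdist _ _ (hφz k)) ?_
    simpa using ((tendsto_iff_dist_tendsto_zero.1 hz).comp hφ.tendsto_atTop).const_mul α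
  have hshift_lim : Tendsto (fun k => f (f^[φ k] x)) atTop (𝓝 z) := by
    simpa only [comp_def, iterate_succ_apply'] using
      ((tendsto_add_atTop_iff_nat 1).2 hz).comp hφ.tendsto_atTop
  exact tendsto_nhds_unique hf_lim hshift_lim

theorem tendsto_iterate_of_cmp_of_cmp (hcmp : ∀ x y : X, Cmp x y → Cmp (f x) (f y))
    (hα₀ : 0 ≤ α) (hα₁ : α < 1) (hdist : ∀ x y : X, Cmp x y → dist (f x) (f y) ≤ α * dist x y)
    {x w z : X} (hz : IsFixedPt f z) (hxw : Cmp x w) (hwz : Cmp w z) :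
    Tendsto (fun n => f^[n] x) atTop (𝓝 z) := by
  rw [tendsto_iff_dist_tendsto_zero]
  have hlim := (tendsto_dist_iterate_of_cmp hcmp hα₀ hα₁ hdist hxw).add
    (tendsto_dist_iterate_of_cmp hcmp hα₀ hα₁ hdist hwz)
  rw [add_zero] at hlim
  refine squeeze_zero (fun _ => dist_nonneg) (fun n => ?_) hlim
  calc dist (f^[n] x) z = dist (f^[n] x) (f^[n] z) := by rw [(hz.iterate n).eq]
    _ ≤ dist (f^[n] x) (f^[n] w) + dist (f^[n] w) (f^[n] z) := dist_triangle _ _ _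

end

/-- Theorem 1.3 (Nieto–Rodríguez-López, comparable version). -/
theorem stmt16 {X : Type*} [MetricSpace X] [PartialOrder X] [CompleteSpace X]
    (f : X → X)
    (hb : ∀ x y : X, x ≤ y → Cmp (f x) (f y))
    (hc : Continuous f ∨ TCC X)
    (hd : ∃ x₀ : X, Cmp x₀ (f x₀))
    (he : ∃ α : ℝ, 0 ≤ α ∧ α < 1 ∧
      ∀ x y : X, x ≤ y → dist (f x) (f y) ≤ α * dist x y)
    (hf : ∀ x y : X, ∃ z : X, Cmp x z ∧ Cmp y z) :
    ∃ z : X, f z = z ∧ (∀ w : X, f w = w → w = z) ∧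
      ∀ x : X, Tendsto (fun n => f^[n] x) atTop (𝓝 z) := by
  obtain ⟨α, hα₀, hα₁, hcontr⟩ := he
  obtain ⟨x₀, hx₀⟩ := hd
  have hcmp (x y : X) : Cmp x y → Cmp (f x) (f y) := cmp_apply_of_le_imp_cmp hb
  have hdist (x y : X) : Cmp x y → dist (f x) (f y) ≤ α * dist x y := dist_apply_le_of_cmp hcontr
  obtain ⟨z, hz⟩ := cauchySeq_tendsto_of_complete
    (cauchySeq_iterate_of_cmp_apply hcmp hα₀ hα₁ hdist hx₀)
  have hfix : IsFixedPt f z := hc.elim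
    (fun hcont => isFixedPt_of_tendsto_iterate hz hcont.continuousAt)
    (fun htcc => isFixedPt_of_tendsto_iterate_of_tcc htcc hcmp hdist hx₀ hz)
  have hconv (x : X) : Tendsto (fun n => f^[n] x) atTop (𝓝 z) := by
    obtain ⟨w, hxw, hzw⟩ := hf x z
    exact tendsto_iterate_of_cmp_of_cmp hcmp hα₀ hα₁ hdist hfix hxw hzw.symm
  refine ⟨z, hfix, fun w hw => ?_, hconv⟩
  exact tendsto_nhds_unique (tendsto_const_nhds.congr fun n => (iterate_fixed hw n).symm) (hconv w)
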